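/- Every shifted odd margin loss is adversarially calibrated at every level ε > 0. That is, if φ(α) = λ + ψ(α − τ) with λ ≥ 0, τ > 0, and ψ a continuous, bounded-below, decreasing odd function strictly decreasing near 0 with ψ ≥ −λ, then φ_ε is calibrated with respect to l_{0/1,ε}. -/
import Mathlib

open MeasureTheory Metric Filter Set

/-- Sign with the convention `sign 0 = 1`. -/
noncomputable def sgn (t : ℝ) : ℝ := if 0 ≤ t then 1 else -1

/-- The 0/1 loss `l_{0/1}(y, t) = 1_{y · sign(t) ≤ 0}` (as a function of the label and of `f x`). -/
noncomputable def l01 : ℝ → ℝ → ℝ := fun y t => if y * sgn t ≤ 0 then 1 else 0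

/-- The margin loss associated with `φ`: `(y, t) ↦ φ(y t)`. -/
noncomputable def margin (φ : ℝ → ℝ) : ℝ → ℝ → ℝ := fun y t => φ (y * t)

/-- The adversarial version of a loss `L`: `sup_{x' ∈ B_ε(x)} L(y, f x')`. -/
noncomputable def advLoss {X : Type*} [MetricSpace X] (L : ℝ → ℝ → ℝ) (ε : ℝ) (x : X)
    (y : ℝ) (f : X → ℝ) : ℝ :=
  ⨆ x' : closedBall x ε, L y (f x')

/-- The calibration function of the adversarial loss:
`C(x, η, f) = η L_ε(x, 1, f) + (1-η) L_ε(x, -1, f)`. -/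
noncomputable def advCal {X : Type*} [MetricSpace X] (L : ℝ → ℝ → ℝ) (ε : ℝ) (x : X)
    (η : ℝ) (f : X → ℝ) : ℝ :=
  η * advLoss L ε x 1 f + (1 - η) * advLoss L ε x (-1) f

/-- Optimal adversarial calibration function (infimum over measurable functions). -/
noncomputable def advCalStar (X : Type*) [MetricSpace X] [MeasurableSpace X]
    (L : ℝ → ℝ → ℝ) (ε : ℝ) (x : X) (η : ℝ) : ℝ :=
  ⨅ f : {f : X → ℝ // Measurable f}, advCal L ε x η f.1

/-- Standard (non-adversarial) calibration function. -/
noncomputable def stdCal {X : Type*} (L : ℝ → ℝ → ℝ) (x : X) (η : ℝ) (f : X → ℝ) : ℝ :=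
  η * L 1 (f x) + (1 - η) * L (-1) (f x)

/-- Optimal standard calibration function (infimum over measurable functions). -/
noncomputable def stdCalStar (X : Type*) [MeasurableSpace X] [TopologicalSpace X]
    (L : ℝ → ℝ → ℝ) (x : X) (η : ℝ) : ℝ :=
  ⨅ f : {f : X → ℝ // Measurable f}, stdCal L x η f.1

/-- Standard risk of `f` for the loss `L` under a distribution `Q` on `X × ℝ`
(labels are the real values `±1`). -/
noncomputable def stdRisk {X : Type*} [MeasurableSpace X] (L : ℝ → ℝ → ℝ)
    (Q : Measure (X × ℝ)) (f : X → ℝ) : ℝ :=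
  ∫ p, L p.2 (f p.1) ∂Q

/-- Adversarial risk of `f` at level `ε` for the loss `L` under `P`. -/
noncomputable def advRisk {X : Type*} [MetricSpace X] [MeasurableSpace X] (L : ℝ → ℝ → ℝ)
    (ε : ℝ) (P : Measure (X × ℝ)) (f : X → ℝ) : ℝ :=
  ∫ p, advLoss L ε p.1 p.2 f ∂P

/-- `φ` is calibrated (w.r.t. the 0/1 loss) in the standard classification setting;
for margin losses this is a pointwise condition on the real line. -/
def StdCalibrated (φ : ℝ → ℝ) : Prop :=
  ∀ ξ > (0:ℝ), ∀ η ∈ Icc (0:ℝ) 1, ∃ δ > (0:ℝ), ∀ α : ℝ,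
    η * φ α + (1 - η) * φ (-α) - (⨅ β : ℝ, η * φ β + (1 - η) * φ (-β)) ≤ δ →
    η * l01 1 α + (1 - η) * l01 (-1) α - min η (1 - η) ≤ ξ

/-- `φ` is uniformly calibrated in the standard classification setting. -/
def StdUnifCalibrated (φ : ℝ → ℝ) : Prop :=
  ∀ ξ > (0:ℝ), ∃ δ > (0:ℝ), ∀ η ∈ Icc (0:ℝ) 1, ∀ α : ℝ,
    η * φ α + (1 - η) * φ (-α) - (⨅ β : ℝ, η * φ β + (1 - η) * φ (-β)) ≤ δ →
    η * l01 1 α + (1 - η) * l01 (-1) α - min η (1 - η) ≤ ξ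

/-- `φ` is adversarially calibrated at level `ε`. -/
def AdvCalibrated (X : Type*) [MetricSpace X] [MeasurableSpace X] (φ : ℝ → ℝ) (ε : ℝ) : Prop :=
  ∀ ξ > (0:ℝ), ∀ η ∈ Icc (0:ℝ) 1, ∀ x : X, ∃ δ > (0:ℝ), ∀ f : X → ℝ, Measurable f →
    advCal (margin φ) ε x η f - advCalStar X (margin φ) ε x η ≤ δ →
    advCal l01 ε x η f - advCalStar X l01 ε x η ≤ ξ


lemma l01_one' (t : ℝ) : l01 1 t = if 0 ≤ t then 0 else 1 := by
  unfold l01 sgn; by_cases h : 0 ≤ t <;> simp [h]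

lemma l01_neg' (t : ℝ) : l01 (-1) t = if 0 ≤ t then 1 else 0 := by
  unfold l01 sgn; by_cases h : 0 ≤ t <;> simp [h]

lemma l01_nonneg' (y t : ℝ) : 0 ≤ l01 y t := by
  unfold l01; split <;> norm_num

lemma l01_le_one' (y t : ℝ) : l01 y t ≤ 1 := by
  unfold l01; split <;> norm_num

lemma drop_lemma (ψ : ℝ → ℝ) (lam τ : ℝ) (hτ : 0 < τ)
    (hub : ∀ t, ψ t ≤ lam) (hψ0 : ψ 0 = 0) (e : ℝ) (he : 0 < e)
    (h : ∀ α : ℝ, α + τ ≤ 0 → e < ψ (α - τ) - ψ (α + τ)) : False := by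
  have key : ∀ n : ℕ, (n : ℝ) * e ≤ ψ (-(2 * τ * n)) := by
    intro n
    induction n with
    | zero => simp [hψ0]
    | succ n ih =>
      have h1 := h (-(2 * τ * n) - τ) (by nlinarith [n.cast_nonneg (α := ℝ)])
      have h2 : ψ (-(2 * τ * ↑n) - τ - τ) = ψ (-(2 * τ * (n + 1 : ℕ))) := by
        push_cast; ring_nf
      have h3 : ψ (-(2 * τ * ↑n) - τ + τ) = ψ (-(2 * τ * (n : ℕ))) := by
        push_cast; ring_nf
      rw [h2, h3] at h1
      push_cast at h1 ih ⊢
      linarith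
  obtain ⟨n, hn⟩ := exists_nat_gt (lam / e)
  have := key n
  have h2 := hub (-(2 * τ * n))
  have : lam < (n:ℝ) * e := by
    rw [div_lt_iff₀ he] at hn; linarith
  linarith

theorem stmt10 {X : Type*} [MetricSpace X] [MeasurableSpace X]
    (lam τ : ℝ) (hlam : 0 ≤ lam) (hτ : 0 < τ)
    (ψ : ℝ → ℝ) (hcont : Continuous ψ) (hdec : Antitone ψ)
    (hodd : ∀ α, ψ (-α) = -ψ α)
    (hstrict : ∃ ρ > (0:ℝ), StrictAntiOn ψ (Icc (-ρ) ρ))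
    (hlb : ∀ α, -lam ≤ ψ α)
    (φ : ℝ → ℝ) (hφ : ∀ α, φ α = lam + ψ (α - τ)) :
    ∀ ε > (0:ℝ), AdvCalibrated X φ ε := by
  -- Basic facts about ψ and φ
  have hψ0 : ψ 0 = 0 := by have := hodd 0; simp at this; linarith
  have hψub : ∀ t, ψ t ≤ lam := by
    intro t; have h1 := hlb (-t); rw [hodd] at h1; linarith
  have hφ0 : ∀ s, 0 ≤ φ s := by intro s; rw [hφ]; linarith [hlb (s - τ)]
  have hφub : ∀ s, φ s ≤ 2 * lam := by intro s; rw [hφ]; linarith [hψub (s - τ)]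
  obtain ⟨ρ, hρpos, hsa⟩ := hstrict
  set c := ψ (-τ) with hc_def
  have hc : 0 < c := by
    have h1 : ψ (-(min ρ τ)) ≤ ψ (-τ) := hdec (by simp [min_le_right ρ τ])
    have h2 : ψ 0 < ψ (-(min ρ τ)) := by
      apply hsa (a := -(min ρ τ)) (b := 0)
      · constructor <;> [linarith [min_le_left ρ τ]; linarith [lt_min hρpos hτ]]
      · constructor <;> linarith
      · linarith [lt_min hρpos hτ]
    rw [hψ0] at h2; linarith
  intro ε hε ξ hξ η hη x₀
  obtain ⟨hη0, hη1⟩ := hη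
  have h1mη : (0:ℝ) ≤ 1 - η := by linarith
  refine ⟨c / 2 * min 1 ξ, by positivity, ?_⟩
  intro f hf hgap
  set δ := c / 2 * min 1 ξ with hδ_def
  have hδc : δ < c := by
    nlinarith [min_le_left 1 ξ]
  have hx0B : x₀ ∈ closedBall x₀ ε := mem_closedBall_self hε.le
  haveI hne : Nonempty ↥(closedBall x₀ ε) := ⟨⟨x₀, hx0B⟩⟩
  haveI hneM : Nonempty {g : X → ℝ // Measurable g} := ⟨⟨fun _ => 0, measurable_const⟩⟩
  -- boundedness of margin-loss sup families
  have hbddm : ∀ (y : ℝ) (g : X → ℝ),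
      BddAbove (Set.range fun x' : ↥(closedBall x₀ ε) => margin φ y (g x')) := by
    intro y g; refine ⟨2 * lam, ?_⟩; rintro _ ⟨i, rfl⟩; exact hφub _
  have hbdd01 : ∀ (y : ℝ) (g : X → ℝ),
      BddAbove (Set.range fun x' : ↥(closedBall x₀ ε) => l01 y (g x')) := by
    intro y g; refine ⟨1, ?_⟩; rintro _ ⟨i, rfl⟩; exact l01_le_one' _ _
  -- lower bounds on adv margin loss from single points
  have hml : ∀ (y : ℝ) (a : X), a ∈ closedBall x₀ ε →
      φ (y * f a) ≤ advLoss (margin φ) ε x₀ y f := by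
    intro y a ha
    exact le_ciSup (hbddm y f) ⟨a, ha⟩
  have hcal_ge : ∀ a b : X, a ∈ closedBall x₀ ε → b ∈ closedBall x₀ ε →
      η * φ (f b) + (1 - η) * φ (-(f a)) ≤ advCal (margin φ) ε x₀ η f := by
    intro a b ha hb
    have h1 := hml 1 b hb; rw [one_mul] at h1
    have h2 := hml (-1) a ha; rw [neg_one_mul] at h2
    unfold advCal
    have := add_le_add (mul_le_mul_of_nonneg_left h1 hη0) (mul_le_mul_of_nonneg_left h2 h1mη)
    exact this
  -- advCalStar (margin φ) ≤ lam
  have hCstar : advCalStar X (margin φ) ε x₀ η ≤ lam := by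
    have h0 : ∀ g : {g : X → ℝ // Measurable g}, 0 ≤ advCal (margin φ) ε x₀ η g.1 := by
      intro g
      have s1 : (0:ℝ) ≤ advLoss (margin φ) ε x₀ 1 g.1 :=
        Real.iSup_nonneg fun i => hφ0 _
      have s2 : (0:ℝ) ≤ advLoss (margin φ) ε x₀ (-1) g.1 :=
        Real.iSup_nonneg fun i => hφ0 _
      have := add_le_add (mul_le_mul_of_nonneg_left s1 hη0) (mul_le_mul_of_nonneg_left s2 h1mη)
      simpa [advCal] using this
    refine le_of_forall_pos_le_add ?_
    intro e he
    -- choose α depending on whether η ≤ 1/2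
    obtain ⟨α, hαcase, hαdrop⟩ :
        ∃ α : ℝ, ((η ≤ 1/2 ∧ 0 ≤ ψ (α + τ)) ∨ (1/2 ≤ η ∧ ψ (α + τ) ≤ 0)) ∧
          ψ (α - τ) - ψ (α + τ) ≤ e := by
      rcases le_total η (1/2) with hhalf | hhalf
      · by_contra hcon
        push_neg at hcon
        refine drop_lemma ψ lam τ hτ hψub hψ0 e he ?_
        intro α hα
        rcases lt_or_ge e (ψ (α - τ) - ψ (α + τ)) with h | h
        · exact h
        · exfalso
          have : 0 ≤ ψ (α + τ) := by rw [← hψ0]; exact hdec (by linarith)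
          exact absurd h (not_le.2 (hcon α (Or.inl ⟨hhalf, this⟩)))
      · by_contra hcon
        push_neg at hcon
        refine drop_lemma ψ lam τ hτ hψub hψ0 e he ?_
        intro α hα
        rcases lt_or_ge e (ψ (α - τ) - ψ (α + τ)) with h | h
        · exact h
        · exfalso
          -- reflect: β := -α gives ψ(β+τ) ≤ 0
          have hβ : ψ (-α + τ) ≤ 0 := by
            rw [← hψ0]
            exact hdec (by linarith)
          have e1 : ψ (-α - τ) = -ψ (α + τ) := by
            rw [show -α - τ = -(α + τ) by ring, hodd]
          have e2 : ψ (-α + τ) = -ψ (α - τ) := by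
            rw [show -α + τ = -(α - τ) by ring, hodd]
          have hd : ψ (-α - τ) - ψ (-α + τ) ≤ e := by rw [e1, e2]; linarith
          have : ψ (-α + τ) = ψ (-α + τ) := rfl
          exact absurd hd (not_le.2 (hcon (-α) (Or.inr ⟨hhalf, hβ⟩)))
    have hle : advCalStar X (margin φ) ε x₀ η ≤ advCal (margin φ) ε x₀ η (fun _ => α) := by
      have hb : BddBelow (Set.range fun g : {g : X → ℝ // Measurable g} =>
          advCal (margin φ) ε x₀ η g.1) := by
        refine ⟨0, ?_⟩; rintro _ ⟨g, rfl⟩; exact h0 g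
      exact ciInf_le hb ⟨fun _ => α, measurable_const⟩
    have hval : advCal (margin φ) ε x₀ η (fun _ => α) = η * φ α + (1 - η) * φ (-α) := by
      unfold advCal advLoss margin
      rw [ciSup_const, ciSup_const, one_mul, neg_one_mul]
    rw [hval] at hle
    have hoddα : ψ (-α - τ) = -ψ (α + τ) := by
      rw [show -α - τ = -(α + τ) by ring, hodd]
    rw [hφ α, hφ (-α), hoddα] at hle
    rcases hαcase with ⟨hh, hsign⟩ | ⟨hh, hsign⟩ <;> nlinarith
  have hAC : advCal (margin φ) ε x₀ η f ≤ lam + δ := by linarith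
  -- lower bound on advCalStar l01
  have hstar01 : min η (1 - η) ≤ advCalStar X l01 ε x₀ η := by
    apply le_ciInf
    rintro ⟨g, hg⟩
    set s₁ := advLoss l01 ε x₀ 1 g with hs₁
    set s₂ := advLoss l01 ε x₀ (-1) g with hs₂
    have h1 : 0 ≤ s₁ := Real.iSup_nonneg fun i => l01_nonneg' _ _
    have h2 : 0 ≤ s₂ := Real.iSup_nonneg fun i => l01_nonneg' _ _
    have h3 : 1 ≤ s₁ + s₂ := by
      by_cases h : 0 ≤ g x₀
      · have : l01 (-1) (g x₀) ≤ s₂ := le_ciSup (hbdd01 (-1) g) ⟨x₀, hx0B⟩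
        rw [l01_neg', if_pos h] at this; linarith
      · have : l01 1 (g x₀) ≤ s₁ := le_ciSup (hbdd01 1 g) ⟨x₀, hx0B⟩
        rw [l01_one', if_neg h] at this; linarith
    show min η (1 - η) ≤ η * s₁ + (1 - η) * s₂
    have hm1 : min η (1 - η) ≤ η := min_le_left _ _
    have hm2 : min η (1 - η) ≤ 1 - η := min_le_right _ _
    have hm0 : 0 ≤ min η (1 - η) := le_min hη0 h1mη
    nlinarith [mul_le_mul_of_nonneg_right hm1 h1, mul_le_mul_of_nonneg_right hm2 h2,
      mul_le_mul_of_nonneg_left h3 hm0]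
  have hδpos : 0 < δ := mul_pos (by positivity) (lt_min one_pos hξ)
  have hsle1 : ∀ y : ℝ, advLoss l01 ε x₀ y f ≤ 1 := fun y => ciSup_le fun i => l01_le_one' _ _
  by_cases hA : ∃ a ∈ closedBall x₀ ε, 0 ≤ f a
  · by_cases hB : ∃ b ∈ closedBall x₀ ε, f b < 0
    · -- sign change on the ball: contradiction with small φ-gap
      exfalso
      obtain ⟨a, ha, hfa⟩ := hA
      obtain ⟨b, hb, hfb⟩ := hB
      have hcg := hcal_ge a b ha hb
      have e1 : lam + c ≤ φ (f b) := by
        rw [hφ]; have : ψ (-τ) ≤ ψ (f b - τ) := hdec (by linarith); linarith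
      have e2 : lam + c ≤ φ (-(f a)) := by
        rw [hφ]; have : ψ (-τ) ≤ ψ (-(f a) - τ) := hdec (by linarith); linarith
      have hkey : η * φ (f b) + (1 - η) * φ (-(f a)) ≤ lam + δ := hcg.trans hAC
      have k1 := mul_le_mul_of_nonneg_left e1 hη0
      have k2 := mul_le_mul_of_nonneg_left e2 h1mη
      have hδe : δ = c / 2 * min 1 ξ := hδ_def
      have k4 := mul_le_mul_of_nonneg_right (min_le_left 1 ξ) hc.le
      linarith only [hkey, k1, k2, hδe, k4, hc]
    · -- f nonnegative on the whole ball
      push_neg at hB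
      have hs1 : advLoss l01 ε x₀ 1 f = 0 := by
        apply le_antisymm
        · apply ciSup_le; intro i; rw [l01_one', if_pos (hB i i.2)]
        · exact Real.iSup_nonneg fun i => l01_nonneg' _ _
      have hs2 : advLoss l01 ε x₀ (-1) f = 1 := by
        apply le_antisymm (hsle1 _)
        have h := le_ciSup (hbdd01 (-1) f) (⟨x₀, hx0B⟩ : ↥(closedBall x₀ ε))
        rw [l01_neg', if_pos (hB x₀ hx0B)] at h
        exact h
      have hval : advCal l01 ε x₀ η f = 1 - η := by unfold advCal; rw [hs1, hs2]; ring
      rw [hval]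
      by_cases hη2 : 1 - 2*η ≤ ξ
      · rcases le_total η (1 - η) with h | h
        · rw [min_eq_left h] at hstar01; linarith
        · rw [min_eq_right h] at hstar01; linarith
      · exfalso
        push_neg at hη2
        have hfx : 0 ≤ f x₀ := hB x₀ hx0B
        have hcg := hcal_ge x₀ x₀ hx0B hx0B
        have hφt : φ (f x₀) = lam + ψ (f x₀ - τ) := hφ _
        have hφnt : φ (-(f x₀)) = lam - ψ (f x₀ + τ) := by
          rw [hφ, show -(f x₀) - τ = -(f x₀ + τ) by ring, hodd]; ring
        have hmono : ψ (f x₀ + τ) ≤ ψ (f x₀ - τ) := hdec (by linarith)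
        have hψτ : ψ τ = -c := by rw [hc_def, hodd]; ring
        have hub2 : ψ (f x₀ + τ) ≤ -c := by
          have h1 : ψ (f x₀ + τ) ≤ ψ τ := hdec (by linarith)
          linarith
        rw [hφt, hφnt] at hcg
        have hkey : η * (lam + ψ (f x₀ - τ)) + (1 - η) * (lam - ψ (f x₀ + τ)) ≤ lam + δ :=
          hcg.trans hAC
        have k1 := mul_le_mul_of_nonneg_left hmono hη0
        have k2 := mul_le_mul_of_nonneg_right hub2 (by linarith : (0:ℝ) ≤ 1 - 2*η)
        have k3 := mul_lt_mul_of_pos_right hη2 hc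
        have k4 := mul_le_mul_of_nonneg_right (min_le_right 1 ξ) hc.le
        have hδe : δ = c / 2 * min 1 ξ := hδ_def
        have k5 := mul_pos hξ hc
        linarith only [hkey, k1, k2, k3, k4, k5, hδe]
  · -- f negative on the whole ball
    push_neg at hA
    have hs1 : advLoss l01 ε x₀ 1 f = 1 := by
      apply le_antisymm (hsle1 _)
      have h := le_ciSup (hbdd01 1 f) (⟨x₀, hx0B⟩ : ↥(closedBall x₀ ε))
      rw [l01_one', if_neg (not_le.2 (hA x₀ hx0B))] at h
      exact h
    have hs2 : advLoss l01 ε x₀ (-1) f = 0 := by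
      apply le_antisymm
      · apply ciSup_le; intro i
        rw [l01_neg', if_neg (not_le.2 (hA i i.2))]
      · exact Real.iSup_nonneg fun i => l01_nonneg' _ _
    have hval : advCal l01 ε x₀ η f = η := by unfold advCal; rw [hs1, hs2]; ring
    rw [hval]
    by_cases hη2 : 2*η - 1 ≤ ξ
    · rcases le_total η (1 - η) with h | h
      · rw [min_eq_left h] at hstar01; linarith
      · rw [min_eq_right h] at hstar01; linarith
    · exfalso
      push_neg at hη2
      have hfx : f x₀ < 0 := hA x₀ hx0B
      have hcg := hcal_ge x₀ x₀ hx0B hx0B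
      have hφt : φ (f x₀) = lam + ψ (f x₀ - τ) := hφ _
      have hφnt : φ (-(f x₀)) = lam - ψ (f x₀ + τ) := by
        rw [hφ, show -(f x₀) - τ = -(f x₀ + τ) by ring, hodd]; ring
      have hmono : ψ (f x₀ + τ) ≤ ψ (f x₀ - τ) := hdec (by linarith)
      have hlbc : c ≤ ψ (f x₀ - τ) := hdec (by linarith)
      rw [hφt, hφnt] at hcg
      have hkey : η * (lam + ψ (f x₀ - τ)) + (1 - η) * (lam - ψ (f x₀ + τ)) ≤ lam + δ :=
        hcg.trans hAC
      have k1 := mul_le_mul_of_nonneg_left hmono h1mη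
      have k2 := mul_le_mul_of_nonneg_left hlbc (by linarith : (0:ℝ) ≤ 2*η - 1)
      have k3 := mul_lt_mul_of_pos_right hη2 hc
      have k4 := mul_le_mul_of_nonneg_right (min_le_right 1 ξ) hc.le
      have hδe : δ = c / 2 * min 1 ξ := hδ_def
      have k5 := mul_pos hξ hc
      linarith only [hkey, k1, k2, k3, k4, k5, hδe]
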